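/- For every tag system T, the calculus P_T is contained in {x → (y → x)}: every axiom of P_T, and hence every formula derivable from P_T, is derivable from the single axiom x → (y → x) (x, y distinct variables), i.e., [P_T] ⊆ [{x → (y → x)}]. -/
import Mathlib


namespace PC

/-- `{→}`-formulas over a countably infinite set of propositional variables. -/
inductive Fml : Type where
  | var : ℕ → Fml
  | imp : Fml → Fml → Fml
deriving DecidableEq

namespace Fml

/-- Application of a substitution to a formula. -/
def subst (σ : ℕ → Fml) : Fml → Fml
  | var n => σ n
  | imp A B => imp (subst σ A) (subst σ B)

/-- The set of variables of a formula. -/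
def fvars : Fml → Finset ℕ
  | var n => {n}
  | imp A B => fvars A ∪ fvars B

/-- Derivability from a set of axioms by modus ponens and substitution. -/
inductive Deriv (P : Set Fml) : Fml → Prop
  | ax {A : Fml} : A ∈ P → Deriv P A
  | mp {A B : Fml} : Deriv P A → Deriv P (imp A B) → Deriv P B
  | sub {A : Fml} (σ : ℕ → Fml) : Deriv P A → Deriv P (subst σ A)

end Fml

/-- `B̂`: the result of substituting `B` for the variable `x` (= `var 0`) in `x̂`. -/
def hat (xhat B : Fml) : Fml := Fml.subst (fun n => if n = 0 then B else Fml.var n) xhat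

/-- `A ∘ B := ((B̂ → B̂) → B̂) → (Â → ((B̂ → B̂) → B̂))`. -/
def circ (xhat A B : Fml) : Fml :=
  .imp (.imp (.imp (hat xhat B) (hat xhat B)) (hat xhat B))
    (.imp (hat xhat A) (.imp (.imp (hat xhat B) (hat xhat B)) (hat xhat B)))

/-- `A · B := ((A → A) → A) ∘ B`. -/
def dot (xhat A B : Fml) : Fml := circ xhat (.imp (.imp A A) A) B

/-- `Cform i` is the formula `p → (p → … (p → p))` with `i` antecedents `p`,
where `p := var 0`. -/
def Cform : ℕ → Fml
  | 0 => .var 0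
  | n + 1 => .imp (.var 0) (Cform n)

/-- The code of the letter `aᵢ` (letters of the alphabet `𝒜 = {a₁, …, a_m}` are the
elements of `Fin m`, the letter `a : Fin m` standing for `a_{a+1}`): `Cᵢ ∘ p`. -/
def letterCode (xhat : Fml) {m : ℕ} (a : Fin m) : Fml :=
  circ xhat (Cform (a.val + 1)) (.var 0)

/-- Formal alphabetic-formula trees over the alphabet `Fin m`. -/
inductive ATree (m : ℕ) : Type where
  | leaf : Fin m → ATree m
  | node : ATree m → ATree m → ATree m

/-- The word associated with an alphabetic formula. -/
def ATree.word {m : ℕ} : ATree m → List (Fin m)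
  | .leaf a => [a]
  | .node l r => l.word ++ r.word

/-- The `{→}`-formula denoted by an alphabetic-formula tree. -/
def ATree.toFml {m : ℕ} (xhat : Fml) : ATree m → Fml
  | .leaf a => letterCode xhat a
  | .node l r => dot xhat (l.toFml xhat) (r.toFml xhat)

/-- `A` is an alphabetic formula (an `𝒜`-formula). -/
def IsAForm (m : ℕ) (xhat : Fml) (A : Fml) : Prop := ∃ t : ATree m, t.toFml xhat = A

/-- The code `͞α` of a word `α`: the set of all `𝒜`-formulas `A` with `word(A) = α`. -/
def codeSet {m : ℕ} (xhat : Fml) (α : List (Fin m)) : Set Fml :=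
  { A | ∃ t : ATree m, t.word = α ∧ t.toFml xhat = A }

/-- `A*`: the set of substitution instances of `A`. -/
def Inst (A : Fml) : Set Fml := { B | ∃ σ, Fml.subst σ A = B }

/-- `M*`: the set of substitution instances of members of `M`. -/
def InstSet (M : Set Fml) : Set Fml := { B | ∃ A ∈ M, ∃ σ, Fml.subst σ A = B }

/-- A tag system over the alphabet `Fin m`: the words `ω₁, …, ω_m` and the
deletion number `d`. -/
structure TagSystem (m : ℕ) where
  W : Fin m → List (Fin m)
  d : ℕ

/-- One-step production: `ξ ↦_T ζ` iff `ξ = aᵢβγ` with `|β| = d − 1` and `ζ = γωᵢ`. -/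
def TagStep {m : ℕ} (T : TagSystem m) (ξ ζ : List (Fin m)) : Prop :=
  ∃ (i : Fin m) (β γ : List (Fin m)),
    β.length = T.d - 1 ∧ ξ = i :: (β ++ γ) ∧ ζ = γ ++ T.W i

/-- `ξ ⟾_T ζ`: reflexive-transitive closure of one-step production. -/
def TagProd {m : ℕ} (T : TagSystem m) : List (Fin m) → List (Fin m) → Prop :=
  Relation.ReflTransGen (TagStep T)

/-- `T` halts on `ξ`. -/
def TagHalts {m : ℕ} (T : TagSystem m) (ξ : List (Fin m)) : Prop :=
  ∃ ζ, TagProd T ξ ζ ∧ ζ.length < T.d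

/-- The variables `x, y, z, u` used in the axiom schemes. -/
def Xv : Fml := .var 1
def Yv : Fml := .var 2
def Zv : Fml := .var 3
def Uv : Fml := .var 4

/-- The axioms (R₁)–(R₄). -/
def Raxioms (xhat : Fml) : Set Fml :=
  { .imp (dot xhat Xv (dot xhat Yv Zv)) (dot xhat (dot xhat Xv Yv) Zv),
    .imp (dot xhat (dot xhat Xv Yv) Zv) (dot xhat Xv (dot xhat Yv Zv)),
    .imp (dot xhat (dot xhat Xv (dot xhat Yv Zv)) Uv)
      (dot xhat (dot xhat (dot xhat Xv Yv) Zv) Uv),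
    .imp (dot xhat (dot xhat (dot xhat Xv Yv) Zv) Uv)
      (dot xhat (dot xhat Xv (dot xhat Yv Zv)) Uv) }

/-- The axioms (T₁) and (T₂) of `P_T`. -/
def Taxioms {m : ℕ} (xhat : Fml) (T : TagSystem m) : Set Fml :=
  { F | ∃ (i : Fin m) (α : List (Fin m)) (A B : Fml),
      α.length = T.d - 1 ∧ A ∈ codeSet xhat (i :: α) ∧ B ∈ codeSet xhat (T.W i) ∧
      (F = .imp (dot xhat A Xv) (dot xhat Xv B) ∨ F = .imp A B) }

/-- The calculus `P_T`. -/
def PT {m : ℕ} (xhat : Fml) (T : TagSystem m) : Set Fml := Taxioms xhat T ∪ Raxioms xhat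

/-- `P ⊢ A ⇒ B`: there are `C₀ = A, …, C_n = B` with `P ⊢ Cᵢ → Cᵢ₊₁` for all `i`. -/
def DChain (P : Set Fml) : Fml → Fml → Prop :=
  Relation.ReflTransGen (fun C D => Fml.Deriv P (.imp C D))

/-- `T_α`: the set of `𝒜`-formulas `A` with `α ⟾_T word(A)`. -/
def Tset {m : ℕ} (xhat : Fml) (T : TagSystem m) (α : List (Fin m)) : Set Fml :=
  { A | ∃ t : ATree m, t.toFml xhat = A ∧ TagProd T α t.word }

/-- The halting-condition axioms (H) for the calculus `P₀`. -/
def Haxioms {m : ℕ} (xhat : Fml) (T : TagSystem m) (P₀ : Finset Fml) : Set Fml :=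
  { F | ∃ (α : List (Fin m)) (A B : Fml), α ≠ [] ∧ α.length < T.d ∧
      A ∈ codeSet xhat α ∧ B ∈ P₀ ∧ F = .imp A B }

/-- The calculus `P_{T,P₀}`. -/
def PTP0 {m : ℕ} (xhat : Fml) (T : TagSystem m) (P₀ : Finset Fml) : Set Fml :=
  PT xhat T ∪ Haxioms xhat T P₀

/-- The calculus `P_{T,P₀,ξ}`. -/
def PTP0xi {m : ℕ} (xhat : Fml) (T : TagSystem m) (P₀ : Finset Fml)
    (ξ : List (Fin m)) : Set Fml :=
  PT xhat T ∪ Haxioms xhat T P₀ ∪ codeSet xhat ξ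

/-- `⟨P⟩`: formulas obtained from `P` by one application of modus ponens or
substitution. -/
def stepOnce (P : Set Fml) : Set Fml :=
  { B | ∃ A, A ∈ P ∧ Fml.imp A B ∈ P } ∪ { B | ∃ A ∈ P, ∃ σ, Fml.subst σ A = B }

/-- `⟨P⟩_n`. -/
def stepIter (P : Set Fml) : ℕ → Set Fml
  | 0 => P
  | n + 1 => stepOnce (stepIter P n)

/-- The single axiom `x → (y → x)`. -/
def Kax : Fml := .imp (.var 0) (.imp (.var 1) (.var 0))

/-- An effective encoding of `{→}`-formulas as natural numbers. -/
def encFml : Fml → ℕ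
  | .var n => Nat.pair 0 n
  | .imp A B => Nat.pair 1 (Nat.pair (encFml A) (encFml B))

/-- The fixed effective encoding of `{→}`-calculi (finite sets of formulas)
as natural numbers. -/
def encCalc (P : Finset Fml) : ℕ :=
  Encodable.encode ((P.image encFml).sort (· ≤ ·))


lemma derivK_circ (xhat A B : Fml) : Fml.Deriv {Kax} (circ xhat A B) := by
  have h : Fml.subst (fun n => if n = 0 then
      (Fml.imp (.imp (hat xhat B) (hat xhat B)) (hat xhat B)) else hat xhat A) Kax
      = circ xhat A B := rfl
  exact h ▸ Fml.Deriv.sub _ (Fml.Deriv.ax rfl)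

lemma derivK_imp_of (C D : Fml) (h : Fml.Deriv {Kax} D) :
    Fml.Deriv {Kax} (.imp C D) := by
  have hK : Fml.Deriv {Kax} (.imp D (.imp C D)) := by
    have h2 : Fml.subst (fun n => if n = 0 then D else C) Kax
        = Fml.imp D (.imp C D) := rfl
    exact h2 ▸ Fml.Deriv.sub _ (Fml.Deriv.ax rfl)
  exact Fml.Deriv.mp h hK

lemma derivK_toFml (xhat : Fml) {m : ℕ} (t : ATree m) :
    Fml.Deriv {Kax} (t.toFml xhat) := by
  cases t with
  | leaf a => exact derivK_circ xhat _ _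
  | node l r => exact derivK_circ xhat _ _

/-- For every tag system `T` (with nonempty words `ωᵢ`), the
calculus `P_T` is contained in `{x → (y → x)}`: every axiom of `P_T`, and hence
every formula derivable from `P_T`, is derivable from the single axiom
`x → (y → x)`, i.e. `[P_T] ⊆ [{x → (y → x)}]`. -/
theorem PT_le_K (xhat : Fml) (hx : xhat.fvars = {0})
    (m : ℕ) (T : TagSystem m) (hW : ∀ i, T.W i ≠ []) :
    (∀ A ∈ PT xhat T, Fml.Deriv {Kax} A) ∧
      (∀ A : Fml, Fml.Deriv (PT xhat T) A → Fml.Deriv {Kax} A) := by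
  have hax : ∀ A ∈ PT xhat T, Fml.Deriv {Kax} A := by
    intro A hA
    rcases hA with hT | hR
    · obtain ⟨i, α, C, B, hα, hC, hB, hF | hF⟩ := hT
      · subst hF
        exact derivK_imp_of _ _ (derivK_circ xhat _ _)
      · subst hF
        obtain ⟨t, _, ht⟩ := hB
        exact derivK_imp_of _ _ (ht ▸ derivK_toFml xhat t)
    · rcases hR with h | h | h | h <;>
        exact h ▸ derivK_imp_of _ _ (derivK_circ xhat _ _)
  refine ⟨hax, fun A hA => ?_⟩
  induction hA with
  | ax h => exact hax _ h
  | mp _ _ ih1 ih2 => exact Fml.Deriv.mp ih1 ih2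
  | sub σ _ ih => exact Fml.Deriv.sub σ ih

end PC
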